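/- arXiv:2101.04272 — 3 statements merged into one kernel-verified Lean document; each statement's English description precedes it below -/
import Mathlib

section
/- Let n ≥ 1 and define S : ℝ × ℝⁿ × ℝⁿ → ℝ × ℝⁿ × ℝⁿ by S(x_0, x, p) = (x_0 − p_1²/4, x_1 + p_1/2, x_2, …, x_n, p_1, …, p_n). For 1 ≤ i ≤ n let Λ_i := {(h_i(x)², x, −∇(h_i²)(x)) : x ∈ ℝⁿ} and let L_i := {(x, p) ∈ ℝⁿ × ℝⁿ : x_1 = h_{i,1}(x)², and p_j = −p_1 · ∂(h_{i,1}²)/∂x_j(x) for j = 2,…,n}, with the conventions Λ_0 := {(0, x, 0) : x ∈ ℝⁿ} and L_0 := {(x, 0) : x ∈ ℝⁿ}. Then for every 0 ≤ i ≤ n, the image S(Λ_i) equals {0} × L_i, and S restricts to a bijection from Λ_i onto {0} × L_i. -/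
open scoped ContDiff

noncomputable section

/-- The polynomial `h_i` in the variables `x_1, …, x_i` (0-indexed: it depends on
coordinates `0, …, i-1`): `h_0 = 0`, `h_{i+1}(x) = x 0 - (h_i (x ∘ (·+1)))^2`. -/
def hpoly : ℕ → (ℕ → ℝ) → ℝ
  | 0, _ => 0
  | i + 1, x => x 0 - (hpoly i fun k => x (k + 1)) ^ 2

/-- Extension of a vector of `ℝⁿ` by zeros to an infinite sequence. -/
def extv {n : ℕ} (x : Fin n → ℝ) : ℕ → ℝ := fun k => if h : k < n then x ⟨k, h⟩ else 0

/-- `h_{i,j}` as a function on `ℝⁿ` (0-indexed: it depends on coordinates `j, …, i-1`;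
in the paper's notation `h_{i,j}(x) = h_{i-j}(x_{j+1}, …, x_i)`). -/
def hh (n i j : ℕ) (x : Fin n → ℝ) : ℝ := hpoly (i - j) fun k => extv x (j + k)

/-- The gradient of a function on `ℝⁿ`, via the Fréchet derivative. -/
def grad {n : ℕ} (f : (Fin n → ℝ) → ℝ) (x : Fin n → ℝ) : Fin n → ℝ :=
  fun k => fderiv ℝ f x (Pi.single k 1)

/-- The `m`-th standard basis vector of `ℝⁿ` (zero if `m ≥ n`). -/
def evec (n m : ℕ) : Fin n → ℝ := fun k => if (k : ℕ) = m then 1 else 0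

/-! Write `h_i = x_1 - f` with `f = h_{i,1}²`, which does not depend on `x_1`. Then
`-∇(h_i²) = -2 h_i (e_1 - ∇f)`, so `p_1 = -2 h_i`: the shear `S` sends `h_i²` to
`h_i² - p_1²/4 = 0` and `x_1` to `x_1 - h_i = f(x)`, and the remaining momenta are `-p_1 ∂_j f`.
Conversely a point `(0, y, p)` of `{0} × L_i` is the image of the point of `Λ_i` over
`y - (p_1/2) e_1`, where `f` has the same value and gradient as at `y`. `S` is an invertible shear,
hence injective. -/

theorem Function.update_add_eq_add_single {ι G : Type*} [DecidableEq ι] [AddMonoid G]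
    (x : ι → G) (a : ι) (t : G) : Function.update x a (x a + t) = x + Pi.single a t := by
  ext j
  rcases eq_or_ne j a with rfl | hj <;> simp [*]

section ConormalSets

variable {n : ℕ}

def conormalLegendrian (φ : (Fin n → ℝ) → ℝ) : Set (ℝ × (Fin n → ℝ) × (Fin n → ℝ)) :=
  {z | ∃ x, z = (φ x ^ 2, x, fun k => -grad (fun y => φ y ^ 2) x k)}

/-- For `f` not depending on `x_a`, the conormal Lagrangian of the graph `{x_a = f x}`: its fibre
over `x` is spanned by `dx_a - df(x)`. -/
def conormalLagrangian (a : Fin n) (f : (Fin n → ℝ) → ℝ) : Set ((Fin n → ℝ) × (Fin n → ℝ)) :=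
  {q | q.1 a = f q.1 ∧ ∀ k ≠ a, q.2 k = -q.2 a * grad f q.1 k}

variable (a : Fin n)

def coordShear (z : ℝ × (Fin n → ℝ) × (Fin n → ℝ)) : ℝ × (Fin n → ℝ) × (Fin n → ℝ) :=
  (z.1 - z.2.2 a ^ 2 / 4, z.2.1 + Pi.single a (z.2.2 a / 2), z.2.2)

theorem coordShear_leftInverse :
    Function.LeftInverse
      (fun z : ℝ × (Fin n → ℝ) × (Fin n → ℝ) =>
        (z.1 + z.2.2 a ^ 2 / 4, z.2.1 - Pi.single a (z.2.2 a / 2), z.2.2))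
      (coordShear a) := by
  rintro ⟨c, x, p⟩
  simp [coordShear]

theorem coordShear_injective : Function.Injective (coordShear a) :=
  (coordShear_leftInverse a).injective

theorem conormalLegendrian_zero :
    conormalLegendrian (fun _ : Fin n → ℝ => 0) = {z | z.1 = 0 ∧ z.2.2 = 0} := by
  ext ⟨c, x, p⟩
  simp only [conormalLegendrian, Set.mem_ofPred_eq, Prod.mk.injEq]
  constructor
  · rintro ⟨y, rfl, rfl, rfl⟩
    simp [grad]
    rfl
  · rintro ⟨rfl, rfl⟩
    exact ⟨x, by simp, rfl, by ext; simp [grad]⟩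

theorem coordShear_image_conormalLegendrian_zero :
    coordShear a '' conormalLegendrian (fun _ => 0) = {z | z.1 = 0 ∧ z.2.2 = 0} := by
  rw [conormalLegendrian_zero]
  refine Set.EqOn.image_eq_self ?_
  rintro ⟨c, x, p⟩ ⟨-, rfl : p = 0⟩
  simp [coordShear]

end ConormalSets

section IndependentOfCoord

variable {n : ℕ} {a : Fin n} {f : (Fin n → ℝ) → ℝ}

theorem fderiv_apply_single_eq_zero (hf : ∀ x t, f (x + Pi.single a t) = f x) {x : Fin n → ℝ}
    (hd : DifferentiableAt ℝ f x) : fderiv ℝ f x (Pi.single a 1) = 0 := by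
  rw [← hd.lineDeriv_eq_fderiv, lineDeriv]
  simp [← Pi.single_smul, hf]

theorem grad_add_single (hf : ∀ x t, f (x + Pi.single a t) = f x) (x : Fin n → ℝ) (t : ℝ) :
    grad f (x + Pi.single a t) = grad f x := by
  ext k
  rw [grad, grad, ← fderiv_comp_add_right]
  simp_rw [hf]

theorem grad_sq_coord_sub {x : Fin n → ℝ} (hd : DifferentiableAt ℝ f x) (k : Fin n) :
    grad (fun y => (y a - f y) ^ 2) x k
      = 2 * (x a - f x) * ((Pi.single k 1 : Fin n → ℝ) a - grad f x k) := by
  have hd' : HasFDerivAt (fun y => (y a - f y) ^ 2)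
      ((2 * (x a - f x)) • (ContinuousLinearMap.proj a - fderiv ℝ f x)) x := by
    simpa using ((hasFDerivAt_apply a x).sub hd.hasFDerivAt).pow 2
  simp [grad, hd'.fderiv]

theorem coordShear_conormalLegendrian_point (hf : ∀ x t, f (x + Pi.single a t) = f x)
    (hd : Differentiable ℝ f) (x : Fin n → ℝ) :
    coordShear a ((x a - f x) ^ 2, x, fun k => -grad (fun y => (y a - f y) ^ 2) x k)
      = (0, x + Pi.single a (f x - x a), fun k => -grad (fun y => (y a - f y) ^ 2) x k) := by
  have hgrad : grad f x a = 0 := fderiv_apply_single_eq_zero hf (hd x)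
  simp only [coordShear, grad_sq_coord_sub (hd x), Pi.single_eq_same, hgrad]
  congr 2
  · ring
  · congr 2
    ring

theorem coordShear_image_conormalLegendrian (hf : ∀ x t, f (x + Pi.single a t) = f x)
    (hd : Differentiable ℝ f) :
    coordShear a '' conormalLegendrian (fun y => y a - f y)
      = {0} ×ˢ conormalLagrangian a f := by
  have hgrad x : grad f x a = 0 := fderiv_apply_single_eq_zero hf (hd x)
  apply Set.Subset.antisymm
  · rintro _ ⟨_, ⟨x, rfl⟩, rfl⟩
    rw [coordShear_conormalLegendrian_point hf hd]
    refine ⟨rfl, by simp [hf], fun k hk => ?_⟩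
    simp only [grad_add_single hf, grad_sq_coord_sub (hd x), Pi.single_eq_of_ne' hk,
      Pi.single_eq_same, hgrad]
    ring
  · rintro ⟨c, y, p⟩ ⟨rfl : c = 0, hya : y a = f y, hp : ∀ k ≠ a, p k = -p a * grad f y k⟩
    refine ⟨_, ⟨y + Pi.single a (-(p a / 2)), rfl⟩, ?_⟩
    rw [coordShear_conormalLegendrian_point hf hd, hf]
    simp only [grad_sq_coord_sub (hd _), grad_add_single hf, hf, Pi.add_apply,
      Pi.single_eq_same, ← hya]
    refine Prod.ext rfl (Prod.ext ?_ (funext fun k => ?_))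
    · simp [add_assoc, ← Pi.single_add]
    · rcases eq_or_ne k a with rfl | hk
      · simp only [Pi.single_eq_same, hgrad]
        ring
      · simp only [Pi.single_eq_of_ne' hk]
        rw [hp k hk]
        ring

end IndependentOfCoord

section Polynomials

variable {n : ℕ}

theorem differentiable_hpoly {E : Type*} [NormedAddCommGroup E] [NormedSpace ℝ E]
    {u : ℕ → E → ℝ} (hu : ∀ k, Differentiable ℝ (u k)) (m : ℕ) :
    Differentiable ℝ fun y => hpoly m fun k => u k y := by
  induction m generalizing u with
  | zero => exact differentiable_const 0
  | succ m ih => exact (hu 0).sub ((ih fun k => hu (k + 1)).pow 2)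

theorem differentiable_extv (k : ℕ) : Differentiable ℝ fun x : Fin n → ℝ => extv x k := by
  by_cases h : k < n <;> simp only [extv, h, dite_true, dite_false] <;> fun_prop

theorem differentiable_hh (i j : ℕ) : Differentiable ℝ (hh n i j) :=
  differentiable_hpoly (fun k => differentiable_extv (j + k)) _

theorem hh_succ_zero (hn : 1 ≤ n) (i : ℕ) (x : Fin n → ℝ) :
    hh n (i + 1) 0 x = x ⟨0, hn⟩ - hh n (i + 1) 1 x ^ 2 := by
  simp only [hh, hpoly, extv, Nat.sub_zero, Nat.add_sub_cancel, zero_add, add_comm 1,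
    dif_pos (show 0 < n from hn)]

theorem extv_add_single {a : Fin n} {j : ℕ} (ha : (a : ℕ) ≠ j) (x : Fin n → ℝ) (t : ℝ) :
    extv (x + Pi.single a t) j = extv x j := by
  unfold extv
  split_ifs with h
  · simp [Fin.ext_iff, Ne.symm ha]
  · rfl

theorem hh_add_single {a : Fin n} {i j : ℕ} (ha : (a : ℕ) < j) (x : Fin n → ℝ) (t : ℝ) :
    hh n i j (x + Pi.single a t) = hh n i j x := by
  unfold hh
  congr 1
  funext k
  exact extv_add_single (by omega) x t

end Polynomials

/-- Let `n ≥ 1` and `S(x_0, x, p) = (x_0 - p_1²/4, x_1 + p_1/2, x_2, …, x_n, p)`.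
For `1 ≤ i ≤ n` let `Λ_i = {(h_i(x)², x, -∇(h_i²)(x))}` (for `i = 0` this formula gives the
convention `Λ_0 = {(0, x, 0)}`), and let `L_i = {(x, p) : x_1 = h_{i,1}(x)²,
p_j = -p_1 ∂(h_{i,1}²)/∂x_j (j = 2, …, n)}`, with `L_0 = {(x, 0)}`.  Then for every `0 ≤ i ≤ n`
the image `S(Λ_i)` equals `{0} × L_i`, and `S` restricts to a bijection from `Λ_i` onto it.
(0-indexed: the paper's `x_1, p_1` are coordinates `0`.) -/
theorem stmt_2 (n : ℕ) (hn : 1 ≤ n)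
    (S : ℝ × (Fin n → ℝ) × (Fin n → ℝ) → ℝ × (Fin n → ℝ) × (Fin n → ℝ))
    (hS : ∀ z, S z =
      (z.1 - (z.2.2 ⟨0, hn⟩) ^ 2 / 4,
       Function.update z.2.1 ⟨0, hn⟩ (z.2.1 ⟨0, hn⟩ + z.2.2 ⟨0, hn⟩ / 2),
       z.2.2)) :
    ∀ i : ℕ, i ≤ n →
      S '' {z | ∃ x : Fin n → ℝ,
              z = ((hh n i 0 x) ^ 2, x, fun k => - grad (fun y => (hh n i 0 y) ^ 2) x k)}
        = {z | z.1 = 0 ∧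
            (if i = 0 then z.2.2 = 0
             else z.2.1 ⟨0, hn⟩ = (hh n i 1 z.2.1) ^ 2 ∧
               ∀ k : Fin n, 1 ≤ (k : ℕ) →
                 z.2.2 k = - z.2.2 ⟨0, hn⟩ * grad (fun y => (hh n i 1 y) ^ 2) z.2.1 k)} ∧
      Set.InjOn S {z | ∃ x : Fin n → ℝ,
              z = ((hh n i 0 x) ^ 2, x, fun k => - grad (fun y => (hh n i 0 y) ^ 2) x k)} := by
  intro i _
  obtain rfl : S = coordShear ⟨0, hn⟩ :=
    funext fun z => by rw [hS, coordShear, Function.update_add_eq_add_single]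
  refine ⟨?_, (coordShear_injective _).injOn⟩
  rcases i with _ | i
  · exact coordShear_image_conormalLegendrian_zero _
  · have hf x t : hh n (i + 1) 1 (x + Pi.single ⟨0, hn⟩ t) ^ 2 = hh n (i + 1) 1 x ^ 2 := by
      rw [hh_add_single Nat.zero_lt_one]
    have hd : Differentiable ℝ fun y => hh n (i + 1) 1 y ^ 2 := (differentiable_hh _ _).pow 2
    simp only [hh_succ_zero hn]
    change coordShear _ '' conormalLegendrian _ = _
    rw [coordShear_image_conormalLegendrian hf hd]
    ext ⟨c, x, p⟩
    simp [conormalLagrangian, Fin.ext_iff, Nat.one_le_iff_ne_zero]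
end
end

section
/- Fix integers 0 ≤ k < j ≤ n and a point x ∈ ℝⁿ with h_{j,k}(x) = 0. Then h_{j,m}(x) = h_{k,m}(x) for every 0 ≤ m < k, where h_{k,m}(x) := h_{k−m}(x_{m+1},…,x_k); in particular h_j(x) = h_k(x). (Equivalently: the vanishing of h_{j,k} forces the entire chain of truncations of h_j and of h_k to agree, starting from h_{j,k−1}(x) = x_k = h_{k,k−1}(x).) -/
open scoped ContDiff

noncomputable section

lemma hh_rec (n i m : ℕ) (x : Fin n → ℝ) (h : m < i) :
    hh n i m x = extv x m - (hh n i (m + 1) x) ^ 2 := by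
  have hd : i - m = (i - (m + 1)) + 1 := by omega
  simp only [hh, hd, hpoly]
  congr 2
  apply congrArg
  funext t
  congr 1
  omega

/-- Fix `0 ≤ k < j ≤ n` and `x ∈ ℝⁿ` with `h_{j,k}(x) = 0`.  Then
`h_{j,m}(x) = h_{k,m}(x)` for every `0 ≤ m < k`; in particular `h_j(x) = h_k(x)`. -/
theorem stmt_9 (n j k : ℕ) (hkj : k < j) (hjn : j ≤ n)
    (x : Fin n → ℝ) (hx : hh n j k x = 0) :
    (∀ m : ℕ, m < k → hh n j m x = hh n k m x) ∧ hh n j 0 x = hh n k 0 x := by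
  have key : ∀ d m : ℕ, m + d = k → hh n j m x = hh n k m x := by
    intro d
    induction d with
    | zero =>
      intro m hm
      subst hm
      simp only [Nat.add_zero] at *
      rw [hx, hh, Nat.sub_self, hpoly]
    | succ d ih =>
      intro m hm
      have h1 : m < k := by omega
      rw [hh_rec n j m x (by omega), hh_rec n k m x h1, ih (m + 1) (by omega)]
  refine ⟨fun m hm => key (k - m) m (by omega), ?_⟩
  rcases Nat.eq_zero_or_pos k with hk | hk
  · subst hk
    rw [hh, Nat.sub_zero] at hx ⊢
    rw [hx, hh, Nat.sub_self, hpoly]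
  · exact key k 0 (by omega)
end
end

section
/- Let n ≥ 2, let U ⊆ ℝⁿ be an open neighborhood of the origin, and let g : U → ℝ be a C^∞ function. Assume: (i) g(x) = 0 and ∇g(x) = 0 for every x ∈ U with h_n(x) = 0; and (ii) for each j = 1,…,n−1, g(x) = h_n(x)² and ∇g(x) = ∇(h_n²)(x) for every x ∈ U with h_{n,j}(x) = 0. Then there exist an open neighborhood V ⊆ U of the origin and a C^∞ function β : V → ℝ such that g = (1 + β · ∏_{j=1}^{n−1} h_{n,j}²) · h_n² on V. -/
/-!
Put `f = g - h_n²`. The hypotheses say exactly that `f` and `df` vanish on each hypersurface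
`{h_{n,j} = 0}`, `0 ≤ j < n`. Since `h_{n,j} = x_{j+1} - h_{n,j+1}²` and `h_{n,j+1}` does not
involve `x_{j+1}`, Taylor's formula with integral remainder in the `x_{j+1}`-direction, based at the
point of `{h_{n,j} = 0}` on the same coordinate line, writes `f = h_{n,j}² q` with `q` smooth.
Translations in `x_{j+1}` preserve the hypersurfaces `{h_{n,k} = 0}`, `k > j`, so by symmetry of
second derivatives `q` again vanishes to second order on them, and we divide successively by
`h_{n,0}², …, h_{n,n-1}²`. On a small sup-norm ball `h_{n,k}(x)² ≤ ‖x‖` for `k ≥ 1`, which keeps the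
Taylor segments inside the ball.
-/

open scoped ContDiff

noncomputable section

open scoped Topology Interval
open Set Metric

lemma IsCompact.isOpen_setOf_forall_prodMk_mem {X Y : Type*} [TopologicalSpace X]
    [TopologicalSpace Y] {K : Set Y} (hK : IsCompact K) {W : Set (X × Y)} (hW : IsOpen W) :
    IsOpen {x | ∀ y ∈ K, (x, y) ∈ W} :=
  isOpen_iff_eventually.2 fun _ hx => hK.eventually_forall_of_forall_eventually
    fun y hy => hW.eventually_mem (hx y hy)

section VanishingToOrderTwo

variable {E F : Type*} [NormedAddCommGroup E] [NormedSpace ℝ E] [NormedAddCommGroup F]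
  [NormedSpace ℝ F]

def VanishesToOrderTwoOn (f : E → ℝ) (s : Set E) : Prop :=
  ∀ x ∈ s, f x = 0 ∧ fderiv ℝ f x = 0

def dirDeriv (v : E) (f : E → ℝ) (x : E) : ℝ := fderiv ℝ f x v

lemma VanishesToOrderTwoOn.mono {f : E → ℝ} {s t : Set E} (h : VanishesToOrderTwoOn f t)
    (hst : s ⊆ t) : VanishesToOrderTwoOn f s :=
  fun x hx => h x (hst hx)

lemma vanishesToOrderTwoOn_sub {g φ : E → ℝ} {s : Set E}
    (hg : ∀ x ∈ s, DifferentiableAt ℝ g x) (hφ : ∀ x ∈ s, DifferentiableAt ℝ φ x)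
    (h : ∀ x ∈ s, g x = φ x ∧ fderiv ℝ g x = fderiv ℝ φ x) :
    VanishesToOrderTwoOn (fun x => g x - φ x) s := fun x hx =>
  ⟨sub_eq_zero.2 (h x hx).1, by rw [fderiv_fun_sub (hg x hx) (hφ x hx), (h x hx).2, sub_self]⟩

lemma vanishesToOrderTwoOn_sq {φ : E → ℝ} (hφ : Differentiable ℝ φ) :
    VanishesToOrderTwoOn (fun x => φ x ^ 2) {x | φ x = 0} := fun x hx => by
  refine ⟨by simp [hx.out], ?_⟩
  rw [((hφ x).hasFDerivAt.pow 2).fderiv]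
  simp [hx.out]

lemma VanishesToOrderTwoOn.mul_comp {G : E → ℝ} {s : Set E} (hG : VanishesToOrderTwoOn G s)
    (hGd : ∀ y ∈ s, DifferentiableAt ℝ G y) {ψ : F → E} (hψ : Differentiable ℝ ψ) {c : F → ℝ}
    (hc : Differentiable ℝ c) : VanishesToOrderTwoOn (fun p => c p * G (ψ p)) (ψ ⁻¹' s) := by
  intro p hp
  obtain ⟨hG0, hG1⟩ := hG _ hp
  have hGψ : HasFDerivAt G 0 (ψ p) := hG1 ▸ (hGd _ hp).hasFDerivAt
  refine ⟨by simp [hG0], ?_⟩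
  have hprod := (hc p).hasFDerivAt.fun_mul (hGψ.comp p (hψ p).hasFDerivAt)
  simp only [Function.comp_apply, hG0] at hprod
  simpa using hprod.fderiv

lemma ContDiffOn.dirDeriv {V : Set E} (hV : IsOpen V) {f : E → ℝ} (hf : ContDiffOn ℝ ∞ f V)
    (v : E) : ContDiffOn ℝ ∞ (dirDeriv v f) V :=
  (hf.fderiv_of_isOpen hV le_rfl).clm_apply contDiffOn_const

lemma dirDeriv_dirDeriv {f : E → ℝ} {x : E} (hf : DifferentiableAt ℝ (fderiv ℝ f) x) (v w : E) :
    dirDeriv v (dirDeriv w f) x = fderiv ℝ (fderiv ℝ f) x v w := by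
  change fderiv ℝ (fun y => fderiv ℝ f y w) x v = _
  simp [fderiv_clm_apply hf (differentiableAt_const w)]

lemma VanishesToOrderTwoOn.dirDeriv {V S : Set E} (hV : IsOpen V) {v : E}
    (hS : ∀ x ∈ S, ∀ s : ℝ, x + s • v ∈ S) {f : E → ℝ} (hf : ContDiffOn ℝ 2 f V)
    (h : VanishesToOrderTwoOn f (V ∩ S)) : VanishesToOrderTwoOn (dirDeriv v f) (V ∩ S) := by
  intro y hy
  have hfy : ContDiffAt ℝ 2 f y := hf.contDiffAt (hV.mem_nhds hy.1)
  have hf'y : DifferentiableAt ℝ (fderiv ℝ f) y :=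
    (hfy.fderiv_right (m := 1) (by norm_num)).differentiableAt one_ne_zero
  have hline : (fun s : ℝ => fderiv ℝ f (y + s • v)) =ᶠ[𝓝 0] fun _ => 0 := by
    have hmem : ∀ᶠ s : ℝ in 𝓝 0, y + s • v ∈ V :=
      (by fun_prop : Continuous fun s : ℝ => y + s • v).continuousAt.preimage_mem_nhds
        (by simpa using hV.mem_nhds hy.1)
    filter_upwards [hmem] with s hs
    exact (h _ ⟨hs, hS y hy.2 s⟩).2
  have hv : fderiv ℝ (fderiv ℝ f) y v = 0 := by
    have hderiv := (show DifferentiableAt ℝ (fderiv ℝ f) (y + (0 : ℝ) • v) by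
      simpa using hf'y).deriv_comp_add_smul
    simpa [hline.deriv_eq] using hderiv.symm
  refine ⟨by simp [_root_.dirDeriv, (h y hy).2], ?_⟩
  ext w
  rw [← _root_.dirDeriv, dirDeriv_dirDeriv hf'y, hfy.isSymmSndFDerivAt (by simp) w v, hv]

end VanishingToOrderTwo

section ParametricIntegral

variable {E B : Type*} [NormedAddCommGroup E] [NormedSpace ℝ E] [ProperSpace E]
  [NormedAddCommGroup B] [NormedSpace ℝ B]

lemma hasFDerivAt_intervalIntegral_of_contDiffOn {W : Set (E × ℝ)} (hW : IsOpen W)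
    {F : E × ℝ → B} (hF : ContDiffOn ℝ 1 F W) {x₀ : E} (hx₀ : ∀ t ∈ Icc (0 : ℝ) 1, (x₀, t) ∈ W) :
    HasFDerivAt (fun x => ∫ t in (0 : ℝ)..1, F (x, t))
      (∫ t in (0 : ℝ)..1, fderiv ℝ F (x₀, t) ∘L ContinuousLinearMap.inl ℝ E ℝ) x₀ := by
  obtain ⟨ε, hε, hball⟩ :=
    Metric.isOpen_iff.1 (isCompact_Icc.isOpen_setOf_forall_prodMk_mem hW) x₀ hx₀
  have hK : closedBall x₀ (ε / 2) ×ˢ Icc (0 : ℝ) 1 ⊆ W := fun p ⟨hx, ht⟩ =>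
    hball (closedBall_subset_ball (half_lt_self hε) hx) p.2 ht
  have hDF : ContinuousOn (fun p => fderiv ℝ F p ∘L ContinuousLinearMap.inl ℝ E ℝ) W :=
    (hF.continuousOn_fderiv_of_isOpen hW le_rfl).clm_comp continuousOn_const
  obtain ⟨C, hC⟩ :=
    ((isCompact_closedBall x₀ (ε / 2)).prod isCompact_Icc).exists_bound_of_continuousOn
      (hDF.mono hK)
  have hIoc : Ι (0 : ℝ) 1 ⊆ Icc 0 1 := by
    rw [uIoc_of_le zero_le_one]; exact Ioc_subset_Icc_self
  have hslice : ∀ x ∈ closedBall x₀ (ε / 2), MapsTo (fun t : ℝ => (x, t)) (Icc 0 1) W :=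
    fun x hx t ht => hK ⟨hx, ht⟩
  have hball_mem : closedBall x₀ (ε / 2) ∈ 𝓝 x₀ := closedBall_mem_nhds x₀ (half_pos hε)
  apply intervalIntegral.hasFDerivAt_integral_of_dominated_of_fderiv_le (bound := fun _ => C)
    (interior_mem_nhds.2 hball_mem)
  · filter_upwards [hball_mem] with x hx
    exact ((hF.continuousOn.comp (by fun_prop) (hslice x hx)).mono hIoc).aestronglyMeasurable
      measurableSet_uIoc
  · exact (hF.continuousOn.comp (by fun_prop) (hslice x₀ (mem_closedBall_self
      (half_pos hε).le))).intervalIntegrable_of_Icc zero_le_one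
  · exact ((hDF.comp (by fun_prop) (hslice x₀ (mem_closedBall_self
      (half_pos hε).le))).mono hIoc).aestronglyMeasurable measurableSet_uIoc
  · exact Filter.Eventually.of_forall fun t ht x hx =>
      hC _ ⟨interior_subset hx, hIoc ht⟩
  · exact intervalIntegrable_const
  · refine Filter.Eventually.of_forall fun t ht x hx => ?_
    have hxt : (x, t) ∈ W := hK ⟨interior_subset hx, hIoc ht⟩
    exact ((hF.differentiableOn one_ne_zero _ hxt).differentiableAt
      (hW.mem_nhds hxt)).hasFDerivAt.comp x (hasFDerivAt_prodMk_left x t)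

lemma VanishesToOrderTwoOn.intervalIntegral {W : Set (E × ℝ)} (hW : IsOpen W) {F : E × ℝ → ℝ}
    (hF : ContDiffOn ℝ 1 F W) {s : Set E} (hsW : ∀ x ∈ s, ∀ t ∈ Icc (0 : ℝ) 1, (x, t) ∈ W)
    (hF0 : VanishesToOrderTwoOn F (s ×ˢ Icc 0 1)) :
    VanishesToOrderTwoOn (fun x => ∫ t in (0 : ℝ)..1, F (x, t)) s := by
  intro x hx
  have hF0x : ∀ t ∈ uIcc (0 : ℝ) 1, F (x, t) = 0 ∧ fderiv ℝ F (x, t) = 0 := fun t ht =>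
    hF0 (x, t) ⟨hx, by rwa [uIcc_of_le zero_le_one] at ht⟩
  have hzero : EqOn (fun t => F (x, t)) 0 (uIcc 0 1) := fun t ht => (hF0x t ht).1
  have hzero' : EqOn (fun t => fderiv ℝ F (x, t) ∘L ContinuousLinearMap.inl ℝ E ℝ) 0
      (uIcc 0 1) := fun t ht => by simp [(hF0x t ht).2]
  refine ⟨by simp [intervalIntegral.integral_congr hzero], ?_⟩
  rw [(hasFDerivAt_intervalIntegral_of_contDiffOn hW hF (hsW x hx)).fderiv,
    intervalIntegral.integral_congr hzero']
  simp

end ParametricIntegral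

universe u

-- The induction passes to the derivative, valued in `E →L[ℝ] B`, hence the single universe.
lemma contDiffOn_intervalIntegral_of_contDiffOn {E B : Type u} [NormedAddCommGroup E]
    [NormedSpace ℝ E] [ProperSpace E] [NormedAddCommGroup B] [NormedSpace ℝ B]
    {W : Set (E × ℝ)} (hW : IsOpen W) {F : E × ℝ → B} (hF : ContDiffOn ℝ ∞ F W) :
    ContDiffOn ℝ ∞ (fun x => ∫ t in (0 : ℝ)..1, F (x, t))
      {x | ∀ t ∈ Icc (0 : ℝ) 1, (x, t) ∈ W} := by
  rw [contDiffOn_infty]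
  intro k
  induction k generalizing B with
  | zero =>
    exact contDiffOn_zero.2 fun x hx =>
      (hasFDerivAt_intervalIntegral_of_contDiffOn hW (hF.of_le (by norm_num))
        hx).continuousAt.continuousWithinAt
  | succ k ih =>
    rw [Nat.cast_succ,
      contDiffOn_succ_iff_fderiv_of_isOpen (isCompact_Icc.isOpen_setOf_forall_prodMk_mem hW)]
    refine ⟨fun x hx => (hasFDerivAt_intervalIntegral_of_contDiffOn hW (hF.of_le (by norm_num))
      hx).differentiableAt.differentiableWithinAt, by simp, ?_⟩
    refine (ih ((hF.fderiv_of_isOpen hW le_rfl).clm_comp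
      (contDiffOn_const (c := ContinuousLinearMap.inl ℝ E ℝ)))).congr fun x hx => ?_
    exact (hasFDerivAt_intervalIntegral_of_contDiffOn hW (hF.of_le (by norm_num)) hx).fderiv

section DivisionBySquare

variable {E : Type} [NormedAddCommGroup E] [NormedSpace ℝ E]

lemma Convex.sub_mul_smul_mem {V : Set E} (hV : Convex ℝ V) {x e : E} {c : ℝ} (hx : x ∈ V)
    (hxc : x - c • e ∈ V) {t : ℝ} (ht : t ∈ Icc (0 : ℝ) 1) : x - ((1 - t) * c) • e ∈ V := by
  have h1t : 1 - t ∈ Icc (0 : ℝ) 1 := ⟨by linarith [ht.2], by linarith [ht.1]⟩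
  convert hV.add_smul_sub_mem hx hxc h1t using 1
  module

/-- The integral remainder of Taylor's formula along `e`, based at the point `x - h x • e` of
`{h = 0}`, divided by `h x ^ 2`. -/
def sqQuotient (e : E) (h f : E → ℝ) (x : E) : ℝ :=
  ∫ t in (0 : ℝ)..1, (1 - t) * dirDeriv e (dirDeriv e f) (x - ((1 - t) * h x) • e)

variable {V : Set E} {e : E} {h f : E → ℝ}

lemma eq_sq_mul_sqQuotient (hV : IsOpen V) (hVc : Convex ℝ V)
    (hproj : ∀ x ∈ V, x - h x • e ∈ V) (h_add : ∀ x (s : ℝ), h (x + s • e) = h x + s)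
    (hf : ContDiffOn ℝ 2 f V)
    (hf0 : VanishesToOrderTwoOn f (V ∩ {x | h x = 0})) {x : E} (hx : x ∈ V) :
    f x = h x ^ 2 * sqQuotient e h f x := by
  set y := x - h x • e with hy_def
  have hy : y ∈ V ∩ {x | h x = 0} := by
    refine ⟨hproj x hx, ?_⟩
    simp [hy_def, sub_eq_add_neg, ← neg_smul, h_add]
  have hseg : ∀ t : ℝ, y + t • h x • e = x - ((1 - t) * h x) • e := fun t => by module
  have taylor := map_add_eq_sum_add_integral_iteratedFDeriv (n := 1) (x := y) (y := h x • e)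
    fun t ht => hf.contDiffAt (hV.mem_nhds (hseg t ▸ hVc.sub_mul_smul_mem hx (hproj x hx) ht))
  have hsub : y + h x • e = x := by simp [hy_def]
  have hint : ∀ t ∈ uIcc (0 : ℝ) 1,
      (1 - t) ^ 1 • iteratedFDeriv ℝ (1 + 1) f (y + t • h x • e) (fun _ => h x • e) =
        h x ^ 2 * ((1 - t) * dirDeriv e (dirDeriv e f) (x - ((1 - t) * h x) • e)) := by
    intro t ht
    rw [uIcc_of_le zero_le_one] at ht
    have hz := hVc.sub_mul_smul_mem hx (hproj x hx) ht
    have hdiff : DifferentiableAt ℝ (fderiv ℝ f) (x - ((1 - t) * h x) • e) :=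
      ((hf.contDiffAt (hV.mem_nhds hz)).fderiv_right (m := 1) (by norm_num)).differentiableAt
        one_ne_zero
    rw [hseg, iteratedFDeriv_two_apply, dirDeriv_dirDeriv hdiff]
    simp only [map_smul, smul_apply, smul_eq_mul]
    ring
  rw [hsub, intervalIntegral.integral_congr hint, intervalIntegral.integral_const_mul] at taylor
  simpa [sqQuotient, Finset.sum_range_succ, (hf0 y hy).1, (hf0 y hy).2] using taylor

lemma contDiffOn_sqQuotient [ProperSpace E] (hV : IsOpen V) (hVc : Convex ℝ V)
    (hproj : ∀ x ∈ V, x - h x • e ∈ V) (hsmooth : ContDiff ℝ ∞ h) (hf : ContDiffOn ℝ ∞ f V) :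
    ContDiffOn ℝ ∞ (sqQuotient e h f) V := by
  have hψ : ContDiff ℝ ∞ fun p : E × ℝ => p.1 - ((1 - p.2) * h p.1) • e := by fun_prop
  have hF : ContDiffOn ℝ ∞ (fun p : E × ℝ => (1 - p.2) * dirDeriv e (dirDeriv e f)
      (p.1 - ((1 - p.2) * h p.1) • e)) {p : E × ℝ | p.1 - ((1 - p.2) * h p.1) • e ∈ V} :=
    (contDiffOn_const.sub contDiffOn_snd).mul
      (((hf.dirDeriv hV e).dirDeriv hV e).comp hψ.contDiffOn fun _ hp => hp)
  exact (contDiffOn_intervalIntegral_of_contDiffOn (hV.preimage hψ.continuous) hF).mono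
    fun x hx t ht => hVc.sub_mul_smul_mem hx (hproj x hx) ht

lemma vanishesToOrderTwoOn_sqQuotient [ProperSpace E] (hV : IsOpen V) (hVc : Convex ℝ V)
    (hproj : ∀ x ∈ V, x - h x • e ∈ V) (hsmooth : ContDiff ℝ ∞ h) (hf : ContDiffOn ℝ ∞ f V)
    {S : Set E} (hS : ∀ x ∈ S, ∀ s : ℝ, x + s • e ∈ S)
    (hfS : VanishesToOrderTwoOn f (V ∩ S)) :
    VanishesToOrderTwoOn (sqQuotient e h f) (V ∩ S) := by
  have hψ : ContDiff ℝ ∞ fun p : E × ℝ => p.1 - ((1 - p.2) * h p.1) • e := by fun_prop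
  have hf2 : ContDiffOn ℝ ∞ (dirDeriv e (dirDeriv e f)) V := (hf.dirDeriv hV e).dirDeriv hV e
  have hf2S : VanishesToOrderTwoOn (dirDeriv e (dirDeriv e f)) (V ∩ S) :=
    (hfS.dirDeriv hV hS (hf.of_le (WithTop.coe_le_coe.2 le_top))).dirDeriv hV hS
      ((hf.dirDeriv hV e).of_le (WithTop.coe_le_coe.2 le_top))
  have hF0 := hf2S.mul_comp
    (fun y hy => (hf2.contDiffAt (hV.mem_nhds hy.1)).differentiableAt (by norm_num))
    (hψ.differentiable (by norm_num)) (c := fun p : E × ℝ => 1 - p.2) (by fun_prop)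
  refine VanishesToOrderTwoOn.intervalIntegral (hV.preimage hψ.continuous)
    (((contDiffOn_const.sub contDiffOn_snd).mul (hf2.comp hψ.contDiffOn fun _ hp => hp)).of_le
      (by norm_num))
    (fun x hx t ht => hVc.sub_mul_smul_mem hx.1 (hproj x hx.1) ht) (hF0.mono ?_)
  rintro ⟨x, t⟩ ⟨hx, ht⟩
  refine ⟨hVc.sub_mul_smul_mem hx.1 (hproj x hx.1) ht, ?_⟩
  simpa [sub_eq_add_neg, ← neg_smul] using hS x hx.2 (-((1 - t) * h x))

end DivisionBySquare

lemma eventually_sq_le_norm {E : Type*} [NormedAddCommGroup E] [NormedSpace ℝ E] {φ : E → ℝ}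
    (hφ : DifferentiableAt ℝ φ 0) (h0 : φ 0 = 0) : ∀ᶠ x in 𝓝 0, φ x ^ 2 ≤ ‖x‖ := by
  have hder : HasFDerivAt (fun x => φ x ^ 2) (0 : E →L[ℝ] ℝ) 0 := by
    simpa [h0] using hφ.hasFDerivAt.pow 2
  filter_upwards [(hasFDerivAt_iff_isLittleO_nhds_zero.1 hder).def one_pos] with x hx
  simpa [h0, Real.norm_eq_abs, abs_of_nonneg (sq_nonneg (φ x))] using hx

section SquareIteration

variable {n : ℕ}

lemma hpoly_eq_zero {i : ℕ} {y : ℕ → ℝ} (h : ∀ k, y k = 0) : hpoly i y = 0 := by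
  induction i generalizing y with
  | zero => rfl
  | succ i ih => simp [hpoly, h 0, ih (fun k => h (k + 1))]

lemma hh_zero (j : ℕ) : hh n n j 0 = 0 :=
  hpoly_eq_zero fun k => by simp [extv]

lemma hh_of_le {j : ℕ} (hj : n ≤ j) (x : Fin n → ℝ) : hh n n j x = 0 := by
  simp [hh, Nat.sub_eq_zero_of_le hj, hpoly]

lemma hh_succ (i : Fin n) (x : Fin n → ℝ) : hh n n i x = x i - hh n n (i + 1) x ^ 2 := by
  rw [hh, show n - i = n - (i + 1) + 1 by omega, hpoly]
  congr 1
  · simp [extv]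
  · simp only [hh, add_assoc, add_comm 1]

lemma contDiff_hh (j : ℕ) : ContDiff ℝ ∞ (hh n n j) := by
  induction h : n - j generalizing j with
  | zero => simpa [funext (hh_of_le (by omega : n ≤ j))] using contDiff_const
  | succ d ih =>
    have hj : j < n := by omega
    rw [show hh n n j = fun x => x ⟨j, hj⟩ - hh n n (j + 1) x ^ 2 from funext (hh_succ ⟨j, hj⟩)]
    exact (contDiff_apply ℝ ℝ _).sub ((ih (j + 1) (by omega)).pow 2)

lemma hh_update {k : ℕ} {i : Fin n} (hik : (i : ℕ) < k) (x : Fin n → ℝ) (v : ℝ) :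
    hh n n k (Function.update x i v) = hh n n k x := by
  unfold hh extv
  congr 1
  funext l
  split_ifs with hl
  · exact Function.update_of_ne (by simp [Fin.ext_iff]; omega) _ _
  · rfl

lemma add_smul_single_eq_update (x : Fin n → ℝ) (i : Fin n) (s : ℝ) :
    x + s • Pi.single i 1 = Function.update x i (x i + s) := by
  ext j
  rcases eq_or_ne j i with rfl | hj <;> simp [*]

lemma hh_add_smul_single_of_lt {k : ℕ} {i : Fin n} (hik : (i : ℕ) < k) (x : Fin n → ℝ)
    (s : ℝ) :
    hh n n k (x + s • Pi.single i 1) = hh n n k x := by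
  rw [add_smul_single_eq_update, hh_update hik]

lemma hh_add_smul_single_self (i : Fin n) (x : Fin n → ℝ) (s : ℝ) :
    hh n n i (x + s • Pi.single i 1) = hh n n i x + s := by
  rw [hh_succ, hh_succ i x, hh_add_smul_single_of_lt (Nat.lt_succ_self _)]
  simp only [Pi.add_apply, Pi.smul_apply, Pi.single_eq_same, smul_eq_mul, mul_one]
  ring

end SquareIteration

section Division

variable {n : ℕ} {a : ℝ}

lemma sub_hh_smul_single_mem_ball {x : Fin n → ℝ} (hx : x ∈ ball 0 a) (i : Fin n)
    (hsmall : hh n n (i + 1) x ^ 2 ≤ ‖x‖) : x - hh n n i x • Pi.single i 1 ∈ ball 0 a := by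
  have ha : 0 < a := pos_of_mem_ball hx
  rw [mem_ball_zero_iff] at hx ⊢
  rw [sub_eq_add_neg, ← neg_smul, add_smul_single_eq_update, hh_succ, pi_norm_lt_iff ha]
  intro j
  rcases eq_or_ne j i with rfl | hj
  · simpa [abs_of_nonneg (sq_nonneg (hh n n (j + 1) x))] using hsmall.trans_lt hx
  · simpa [hj] using (norm_le_pi_norm x j).trans_lt hx

lemma exists_eq_prod_sq_mul (hsmall : ∀ x ∈ ball (0 : Fin n → ℝ) a, ∀ i : Fin n,
      hh n n (i + 1) x ^ 2 ≤ ‖x‖)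
    (m : ℕ) {f : (Fin n → ℝ) → ℝ} (hf : ContDiffOn ℝ ∞ f (ball 0 a))
    (hvan : ∀ k, m ≤ k → k < n → VanishesToOrderTwoOn f (ball 0 a ∩ {x | hh n n k x = 0})) :
    ∃ q : (Fin n → ℝ) → ℝ, ContDiffOn ℝ ∞ q (ball 0 a) ∧
      ∀ x ∈ ball 0 a, f x = (∏ k ∈ Finset.Ico m n, hh n n k x ^ 2) * q x := by
  by_cases hm : m < n
  · set i : Fin n := ⟨m, hm⟩
    have hproj : ∀ x ∈ ball 0 a, x - hh n n i x • Pi.single i 1 ∈ ball 0 a :=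
      fun x hx => sub_hh_smul_single_mem_ball hx i (hsmall x hx i)
    obtain ⟨q, hq, hfq⟩ := exists_eq_prod_sq_mul hsmall (m + 1)
      (contDiffOn_sqQuotient isOpen_ball (convex_ball 0 a) hproj (contDiff_hh i) hf)
      fun k hk hkn => vanishesToOrderTwoOn_sqQuotient isOpen_ball (convex_ball 0 a) hproj
        (contDiff_hh i) hf (fun x hx s => by
          simpa [hh_add_smul_single_of_lt (show (i : ℕ) < k by simp [i]; omega)] using hx)
        (hvan k (by omega) hkn)
    refine ⟨q, hq, fun x hx => ?_⟩
    rw [eq_sq_mul_sqQuotient isOpen_ball (convex_ball 0 a) hproj (hh_add_smul_single_self i)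
      (hf.of_le (WithTop.coe_le_coe.2 le_top)) (hvan m le_rfl hm) hx, hfq x hx,
      Finset.prod_eq_prod_Ico_succ_bot hm]
    ring
  · exact ⟨f, hf, fun x _ => by simp [Finset.Ico_eq_empty_of_le (not_lt.1 hm)]⟩
termination_by n - m

end Division

/-- Let `n ≥ 2`, `U` an open neighborhood of `0 ∈ ℝⁿ`, and `g` a `C^∞`
function on `U`.  Assume (i) `g = 0` and `∇g = 0` at every point of `U` with `h_n = 0`, and
(ii) for each `j = 1, …, n-1`, `g = h_n²` and `∇g = ∇(h_n²)` at every point of `U` with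
`h_{n,j} = 0`.  Then there are an open neighborhood `V ⊆ U` of `0` and a `C^∞` function `β` on
`V` with `g = (1 + β ∏_{j=1}^{n-1} h_{n,j}²) h_n²` on `V`. -/
theorem stmt_16 (n : ℕ) (hn : 2 ≤ n) (U : Set (Fin n → ℝ)) (hU : IsOpen U)
    (h0U : (0 : Fin n → ℝ) ∈ U) (g : (Fin n → ℝ) → ℝ) (hg : ContDiffOn ℝ ∞ g U)
    (h1 : ∀ x ∈ U, hh n n 0 x = 0 → g x = 0 ∧ fderiv ℝ g x = 0)
    (h2 : ∀ j : ℕ, 1 ≤ j → j < n → ∀ x ∈ U, hh n n j x = 0 →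
      g x = (hh n n 0 x) ^ 2 ∧
      fderiv ℝ g x = fderiv ℝ (fun y => (hh n n 0 y) ^ 2) x) :
    ∃ V : Set (Fin n → ℝ), IsOpen V ∧ (0 : Fin n → ℝ) ∈ V ∧ V ⊆ U ∧
      ∃ β : (Fin n → ℝ) → ℝ, ContDiffOn ℝ ∞ β V ∧
        ∀ x ∈ V,
          g x = (1 + β x * ∏ j ∈ Finset.Ico 1 n, (hh n n j x) ^ 2) * (hh n n 0 x) ^ 2 := by
  obtain ⟨a, ha, hsmall⟩ : ∃ a > 0, ∀ x ∈ ball (0 : Fin n → ℝ) a,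
      x ∈ U ∧ ∀ i : Fin n, hh n n (i + 1) x ^ 2 ≤ ‖x‖ :=
    Metric.eventually_nhds_iff_ball.1 <| (hU.eventually_mem h0U).and <|
      Filter.eventually_all.2 fun i =>
        eventually_sq_le_norm ((contDiff_hh _).differentiable (by simp) 0) (hh_zero _)
  have haU : ball 0 a ⊆ U := fun x hx => (hsmall x hx).1
  have hd0 : Differentiable ℝ (hh n n 0) := (contDiff_hh 0).differentiable (by simp)
  have hvan : ∀ k < n, VanishesToOrderTwoOn (fun x => g x - hh n n 0 x ^ 2)
      (U ∩ {x | hh n n k x = 0}) := by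
    refine fun k hk => vanishesToOrderTwoOn_sub
      (fun x hx => (hg.contDiffAt (hU.mem_nhds hx.1)).differentiableAt (by simp))
      (fun x _ => (hd0.pow 2) x) fun x ⟨hxU, (hx : hh n n k x = 0)⟩ => ?_
    rcases Nat.eq_zero_or_pos k with rfl | hk0
    · rw [(h1 x hxU hx).1, (h1 x hxU hx).2, (vanishesToOrderTwoOn_sq hd0 x hx).2]
      simp [hx]
    · exact h2 k hk0 hk x hxU hx
  obtain ⟨β, hβ, hgβ⟩ := exists_eq_prod_sq_mul (fun x hx => (hsmall x hx).2) 0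
    ((hg.mono haU).sub ((contDiff_hh 0).pow 2).contDiffOn)
    fun k _ hk => (hvan k hk).mono (inter_subset_inter_left _ haU)
  refine ⟨ball 0 a, isOpen_ball, mem_ball_self ha, haU, β, hβ, fun x hx => ?_⟩
  have hgx := hgβ x hx
  rw [Finset.prod_eq_prod_Ico_succ_bot (by omega : 0 < n)] at hgx
  linear_combination hgx
end
end
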